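/- arXiv:1904.09888 — 2 statements merged into one kernel-verified Lean document; each statement's English description precedes it below -/
import Mathlib

section
/- For distinct length-3 patterns A, B over a fair coin, with Conway's leading numbers AA, AB, BB, BA, the probability that A occurs before B equals (BB - BA) / (AA - AB + BB - BA). -/
open MeasureTheory ProbabilityTheory
open scoped ENNReal

/-- The pattern `P` occurs at time `n` (i.e. within the first `n` draws
`x 0, …, x (n-1)`, as the final block of `P.length` consecutive draws). -/
def occursAt {α : Type*} (P : List α) (x : ℕ → α) (n : ℕ) : Prop :=
  P.length ≤ n ∧ ∀ i (h : i < P.length), x (n - P.length + i) = P.get ⟨i, h⟩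

/-- The first time at which the pattern `P` occurs (`∞` if it never occurs). -/
noncomputable def hitTime {α : Type*} (P : List α) (x : ℕ → α) : ℝ≥0∞ :=
  sInf ((fun n : ℕ => (n : ℝ≥0∞)) '' {n | occursAt P x n})

/-- The fair-coin distribution on `Bool` (`true` = heads `H`, `false` = tails `T`). -/
noncomputable def fairCoin : Measure Bool := (PMF.bernoulli (1/2) (by norm_num)).toMeasure

/-- Conway's leading number XY for patterns of a common length k:
XY = ∑_{s=1}^{k} 2^{k-s} · [last (k-s+1) characters of X = first (k-s+1) characters of Y]. -/
def conwayNum (X Y : List Bool) : ℕ :=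
  ∑ s ∈ Finset.Icc 1 X.length,
    if X.drop (s - 1) = Y.take (X.length - s + 1) then 2 ^ (X.length - s) else 0

/-!
After the first two flips, the last two outcomes perform a Markov chain on `Bool × Bool`, killed
as soon as the last three flips spell `A` or `B`. Writing `v(b, c)` for the expected number of
visits to `(b, c)` before the chain is killed, splitting on the flip before gives
`v(b, c) = 1/4 + ∑ₐ [abc ∉ {A, B}] v(a, b) / 2`, and `v` is finite because each block of three
fresh flips spells `A` with probability `1/8`. `A` comes first exactly when the chain sits in
`(A₁, A₂)` and the next flip is `A₃`, so `P(A before B) = v(A₁, A₂) / 2`; solving the `4 × 4`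
system for each of the 56 ordered pairs gives Conway's formula.
-/

open Set

section DependsOnCoordinates

variable {ι : Type*}

lemma exists_eq_preimage_restrict_of_dependsOn {α : Type*} {E : Set (ι → α)} {s : Finset ι}
    (hE : DependsOn (· ∈ E) (s : Set ι)) : ∃ T : Set (s → α), E = s.restrict ⁻¹' T := by
  obtain ⟨g, hg⟩ := dependsOn_iff_exists_comp.1 hE
  exact ⟨{v | g v}, by ext x; exact Iff.of_eq (congrFun hg x)⟩

lemma measurableSet_of_dependsOn {E : Set (ι → Bool)} {s : Finset ι}
    (hE : DependsOn (· ∈ E) (s : Set ι)) : MeasurableSet E := by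
  obtain ⟨T, rfl⟩ := exists_eq_preimage_restrict_of_dependsOn hE
  exact T.to_countable.measurableSet.preimage (s.measurable_restrict)

lemma dependsOn_inter_eval {β : Type*} {E : Set (ι → β)} {s t : Set ι}
    (hE : DependsOn (· ∈ E) s) (hst : s ⊆ t) {n : ι} (hn : n ∈ t) (c : β) :
    DependsOn (· ∈ E ∩ {x | x n = c}) t := by
  intro x y hxy
  have hx : (x ∈ E) = (y ∈ E) := hE fun i hi => hxy i (hst hi)
  simp only [mem_inter_iff, mem_ofPred_eq, hx, hxy n hn]

lemma infinitePi_inter_eval_eq_mul (μ : ι → Measure Bool) [∀ i, IsProbabilityMeasure (μ i)]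
    {E : Set (ι → Bool)} {s : Finset ι} (hE : DependsOn (· ∈ E) (s : Set ι)) {i : ι}
    (hi : i ∉ s) (c : Bool) :
    Measure.infinitePi μ (E ∩ {x | x i = c}) = Measure.infinitePi μ E * μ i {c} := by
  obtain ⟨T, rfl⟩ := exists_eq_preimage_restrict_of_dependsOn hE
  have hindep : IndepFun s.restrict (fun x : ι → Bool => x i) (Measure.infinitePi μ) := by
    have h := ((iIndepFun_infinitePi (P := μ) (X := fun _ b => b) fun _ => measurable_id)
      |>.indepFun_finset s {i} (by simpa using hi) measurable_pi_apply).comp measurable_id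
      (measurable_pi_apply ⟨i, Finset.mem_singleton_self i⟩)
    exact h
  change Measure.infinitePi μ (_ ∩ (fun x => x i) ⁻¹' {c}) = _
  rw [hindep.measure_inter_preimage_eq_mul _ _ T.to_countable.measurableSet
    (measurableSet_singleton c), (measurePreserving_eval_infinitePi μ i).measure_preimage
    (measurableSet_singleton c).nullMeasurableSet]

end DependsOnCoordinates

lemma ENNReal.tsum_comp_div (f : ℕ → ℝ≥0∞) (d : ℕ) [NeZero d] :
    ∑' m, f (m / d) = d * ∑' k, f k := by
  have hdiv : ∀ (k : ℕ) (r : Fin d), (k * d + r) / d = k := fun k r => by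
    rw [Nat.add_comm, Nat.add_mul_div_right _ _ (NeZero.pos d), Nat.div_eq_of_lt r.2, zero_add]
  rw [← (Nat.divModEquiv d).symm.tsum_eq]
  simp only [Nat.divModEquiv_symm_apply, hdiv]
  rw [ENNReal.tsum_prod (f := fun k _ => f k), ← ENNReal.tsum_mul_left]
  simp [mul_comm]

section HitTime

variable {α : Type*} {P Q : List α} {x : ℕ → α}

lemma hitTime_eq_of_isLeast {n : ℕ} (h : IsLeast {n | occursAt P x n} n) : hitTime P x = n :=
  (Nat.mono_cast.map_isLeast h).csInf_eq

lemma hitTime_le_of_occursAt {n : ℕ} (h : occursAt P x n) : hitTime P x ≤ n :=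
  sInf_le ⟨n, h, rfl⟩

lemma hitTime_lt_iff : hitTime P x < hitTime Q x ↔
    ∃ n, IsLeast {n | occursAt P x n} n ∧ ∀ m ≤ n, ¬ occursAt Q x m := by
  constructor
  · intro hlt
    have hne : {n | occursAt P x n}.Nonempty := by
      by_contra hempty
      simp [hitTime, not_nonempty_iff_eq_empty.1 hempty] at hlt
    have hleast := isLeast_csInf hne
    refine ⟨_, hleast, fun m hm hQ => ?_⟩
    rw [hitTime_eq_of_isLeast hleast] at hlt
    exact (hlt.trans_le (hitTime_le_of_occursAt hQ)).not_ge (by exact_mod_cast hm)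
  · rintro ⟨n, hleast, hQ⟩
    have hQ' : ((n + 1 : ℕ) : ℝ≥0∞) ≤ hitTime Q x := by
      refine le_sInf ?_
      rintro _ ⟨m, hm, rfl⟩
      exact Nat.cast_le.2 (by by_contra! h; exact hQ m (by omega) hm)
    rw [hitTime_eq_of_isLeast hleast]
    exact lt_of_lt_of_le (by exact_mod_cast n.lt_succ_self) hQ'

end HitTime

namespace Penney

noncomputable def coinFlips : Measure (ℕ → Bool) := Measure.infinitePi fun _ => fairCoin

instance : IsProbabilityMeasure fairCoin := by
  unfold fairCoin; infer_instance

instance : IsProbabilityMeasure coinFlips := by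
  unfold coinFlips; infer_instance

lemma fairCoin_singleton (b : Bool) : fairCoin {b} = 2⁻¹ := by
  rw [fairCoin, PMF.toMeasure_apply_singleton _ _ (measurableSet_singleton b)]
  cases b <;> simp [PMF.bernoulli]

lemma map_eq_coinFlips {Ω : Type*} [MeasurableSpace Ω] {μ : Measure Ω} {X : ℕ → Ω → Bool}
    (hmeas : ∀ n, Measurable (X n)) (hindep : iIndepFun X μ)
    (hfair : ∀ n, μ.map (X n) = fairCoin) : μ.map (fun ω n => X n ω) = coinFlips := by
  rw [hindep.map_fun_eq_infinitePi_map hmeas, coinFlips]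
  simp only [hfair]

lemma measure_preimage_eq_coinFlips {Ω : Type*} [MeasurableSpace Ω] {μ : Measure Ω}
    {X : ℕ → Ω → Bool} (hmeas : ∀ n, Measurable (X n)) (hindep : iIndepFun X μ)
    (hfair : ∀ n, μ.map (X n) = fairCoin) {E : (ℕ → Bool) → Prop}
    (hE : MeasurableSet {x | E x}) :
    μ {ω | E fun n => X n ω} = coinFlips {x | E x} := by
  rw [← map_eq_coinFlips hmeas hindep hfair, Measure.map_apply (measurable_pi_lambda _ hmeas) hE]
  rfl

lemma dependsOn_Iio_succ_inter_eval {E : Set (ℕ → Bool)} {n : ℕ}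
    (hE : DependsOn (· ∈ E) (Iio n)) (c : Bool) :
    DependsOn (· ∈ E ∩ {x | x n = c}) (Iio (n + 1)) :=
  dependsOn_inter_eval hE (Iio_subset_Iio n.le_succ) (by simp) c

lemma coinFlips_inter_eval {E : Set (ℕ → Bool)} {n : ℕ} (hE : DependsOn (· ∈ E) (Iio n))
    (c : Bool) : coinFlips (E ∩ {x | x n = c}) = coinFlips E * 2⁻¹ := by
  rw [coinFlips, infinitePi_inter_eval_eq_mul _ (s := Finset.Iio n) (by simpa using hE)
    (by simp), fairCoin_singleton]

def window (x : ℕ → Bool) (j : ℕ) : Bool × Bool × Bool := (x j, x (j + 1), x (j + 2))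

lemma coinFlips_inter_window {E : Set (ℕ → Bool)} {n : ℕ} (hE : DependsOn (· ∈ E) (Iio n))
    (p : Bool × Bool × Bool) : coinFlips (E ∩ {x | window x n = p}) = coinFlips E * 8⁻¹ := by
  obtain ⟨a, b, c⟩ := p
  have hE' : E ∩ {x | window x n = (a, b, c)} =
      E ∩ {x | x n = a} ∩ {x | x (n + 1) = b} ∩ {x | x (n + 2) = c} := by
    ext x; simp [window, and_assoc]
  have h1 := dependsOn_Iio_succ_inter_eval hE a
  rw [hE', coinFlips_inter_eval (dependsOn_Iio_succ_inter_eval h1 b), coinFlips_inter_eval h1,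
    coinFlips_inter_eval hE, mul_assoc, mul_assoc, ← ENNReal.mul_inv (by simp) (by simp),
    ← ENNReal.mul_inv (by simp) (by simp)]
  norm_num

section KilledChain

variable (F : Finset (Bool × Bool × Bool))

def Avoids (n : ℕ) : Set (ℕ → Bool) := {x | ∀ j, j + 3 ≤ n → window x j ∉ F}

def Alive (b c : Bool) (m : ℕ) : Set (ℕ → Bool) :=
  Avoids F (m + 2) ∩ {x | x m = b} ∩ {x | x (m + 1) = c}

noncomputable def expectedVisits (b c : Bool) : ℝ≥0∞ := ∑' m, coinFlips (Alive F b c m)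

def VisitEquations (v : Bool → Bool → ℝ) : Prop :=
  ∀ b c, v b c = 4⁻¹ + ∑ a : Bool, if (a, b, c) ∈ F then 0 else v a b * 2⁻¹

variable {F}

lemma avoids_antitone : Antitone (Avoids F) :=
  fun _ _ hmn _ hx j hj => hx j (hj.trans hmn)

lemma dependsOn_avoids (n : ℕ) : DependsOn (· ∈ Avoids F n) (Iio n) := by
  intro x y hxy
  have hwin : ∀ j, j + 3 ≤ n → window x j = window y j := fun j hj => by
    simp only [window, hxy j (by simp; omega), hxy (j + 1) (by simp; omega),
      hxy (j + 2) (by simp; omega)]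
  exact propext (forall_congr' fun j => forall_congr' fun hj => by rw [hwin j hj])

lemma dependsOn_alive (b c : Bool) (m : ℕ) : DependsOn (· ∈ Alive F b c m) (Iio (m + 2)) :=
  dependsOn_inter_eval (dependsOn_inter_eval (dependsOn_avoids _) subset_rfl (by simp) b)
    subset_rfl (by simp) c

lemma measurableSet_alive (b c : Bool) (m : ℕ) : MeasurableSet (Alive F b c m) :=
  measurableSet_of_dependsOn (s := Finset.Iio (m + 2)) (by simpa using dependsOn_alive b c m)

lemma measurableSet_alive_inter_eval (a b c : Bool) (m : ℕ) :
    MeasurableSet (Alive F a b m ∩ {x | x (m + 2) = c}) :=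
  (measurableSet_alive a b m).inter ((measurableSet_singleton c).preimage (measurable_pi_apply _))

lemma coinFlips_alive_zero (b c : Bool) : coinFlips (Alive F b c 0) = 4⁻¹ := by
  have h0 : Alive F b c 0 = univ ∩ {x | x 0 = b} ∩ {x | x 1 = c} := by
    ext x; simp [Alive, Avoids]
  have huniv : DependsOn (· ∈ (univ : Set (ℕ → Bool))) (Iio 0) := fun _ _ _ => rfl
  rw [h0, coinFlips_inter_eval (dependsOn_Iio_succ_inter_eval huniv b),
    coinFlips_inter_eval huniv, measure_univ, one_mul, ← ENNReal.mul_inv (by simp) (by simp)]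
  norm_num

lemma alive_succ (b c : Bool) (m : ℕ) :
    Alive F b c (m + 1) = ⋃ a : Bool,
      {_x | (a, b, c) ∉ F} ∩ (Alive F a b m ∩ {x | x (m + 2) = c}) := by
  ext x
  simp only [Alive, Avoids, mem_iUnion, mem_inter_iff, mem_ofPred_eq]
  constructor
  · rintro ⟨⟨hx, rfl⟩, rfl⟩
    exact ⟨x m, hx m (by omega), ⟨⟨fun j hj => hx j (by omega), rfl⟩, rfl⟩, rfl⟩
  · rintro ⟨a, habc, ⟨⟨hx, rfl⟩, rfl⟩, rfl⟩
    refine ⟨⟨fun j hj => ?_, rfl⟩, rfl⟩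
    rcases Nat.lt_or_ge j m with hjm | hjm
    · exact hx j (by omega)
    · obtain rfl : j = m := by omega
      exact habc

lemma coinFlips_alive_succ (b c : Bool) (m : ℕ) :
    coinFlips (Alive F b c (m + 1)) =
      ∑ a : Bool, if (a, b, c) ∈ F then 0 else coinFlips (Alive F a b m) * 2⁻¹ := by
  rw [alive_succ, measure_iUnion, tsum_fintype]
  · refine Finset.sum_congr rfl fun a _ => ?_
    split_ifs with habc
    · simp [habc]
    · simpa [habc] using coinFlips_inter_eval (dependsOn_alive a b m) c
  · intro a a' haa'
    rw [Function.onFun, disjoint_left]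
    rintro x ⟨-, ⟨⟨-, rfl⟩, -⟩, -⟩ ⟨-, ⟨⟨-, h⟩, -⟩, -⟩
    exact haa' h
  · exact fun a => (MeasurableSet.const _).inter (measurableSet_alive_inter_eval a b c m)

lemma expectedVisits_eq (b c : Bool) :
    expectedVisits F b c =
      4⁻¹ + ∑ a : Bool, if (a, b, c) ∈ F then 0 else expectedVisits F a b * 2⁻¹ := by
  rw [expectedVisits, tsum_eq_zero_add' ENNReal.summable, coinFlips_alive_zero]
  simp_rw [coinFlips_alive_succ]
  rw [Summable.tsum_finsetSum fun _ _ => ENNReal.summable]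
  refine congrArg _ (Finset.sum_congr rfl fun a _ => ?_)
  split_ifs
  · exact tsum_zero
  · exact ENNReal.tsum_mul_right

lemma coinFlips_avoids_add_three_le {p : Bool × Bool × Bool} (hp : p ∈ F) (n : ℕ) :
    coinFlips (Avoids F (n + 3)) ≤ coinFlips (Avoids F n) * (1 - 8⁻¹) := by
  have hsub : Avoids F (n + 3) ⊆ Avoids F n \ {x | window x n = p} := fun x hx =>
    ⟨avoids_antitone (by omega) hx, fun hxp => hx n le_rfl (hxp ▸ hp)⟩
  have hwin : MeasurableSet {x : ℕ → Bool | window x n = p} :=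
    measurableSet_eq_fun (by unfold window; fun_prop) measurable_const
  have hsplit := measure_sdiff_add_inter (μ := coinFlips) (Avoids F n) hwin
  rw [coinFlips_inter_window (dependsOn_avoids n)] at hsplit
  calc coinFlips (Avoids F (n + 3)) ≤ coinFlips (Avoids F n \ {x | window x n = p}) :=
        measure_mono hsub
    _ = coinFlips (Avoids F n) - coinFlips (Avoids F n) * 8⁻¹ :=
        ENNReal.eq_sub_of_add_eq (by finiteness) hsplit
    _ = coinFlips (Avoids F n) * (1 - 8⁻¹) := by
        rw [ENNReal.mul_sub fun _ _ => measure_ne_top _ _, mul_one]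

lemma coinFlips_avoids_le {p : Bool × Bool × Bool} (hp : p ∈ F) (k : ℕ) :
    coinFlips (Avoids F (3 * k)) ≤ (1 - 8⁻¹) ^ k := by
  induction k with
  | zero => simpa using prob_le_one
  | succ k ih =>
    calc coinFlips (Avoids F (3 * (k + 1))) ≤ coinFlips (Avoids F (3 * k)) * (1 - 8⁻¹) :=
          coinFlips_avoids_add_three_le hp _
      _ ≤ (1 - 8⁻¹) ^ (k + 1) := by rw [pow_succ]; gcongr

lemma expectedVisits_ne_top (hF : F.Nonempty) (b c : Bool) : expectedVisits F b c ≠ ⊤ := by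
  obtain ⟨p, hp⟩ := hF
  have hgeom : ∑' k, (1 - 8⁻¹ : ℝ≥0∞) ^ k ≠ ⊤ :=
    (tsum_geometric_lt_top.2 (ENNReal.sub_lt_self (by simp) (by simp) (by simp))).ne
  refine ne_top_of_le_ne_top (ENNReal.mul_ne_top (by simp : (3 : ℝ≥0∞) ≠ ⊤) hgeom) ?_
  calc expectedVisits F b c ≤ ∑' m, coinFlips (Avoids F (3 * (m / 3))) :=
        ENNReal.tsum_le_tsum fun m => measure_mono <|
          inter_subset_left.trans <| inter_subset_left.trans <| avoids_antitone (by omega)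
    _ = 3 * ∑' k, coinFlips (Avoids F (3 * k)) := by
          exact_mod_cast ENNReal.tsum_comp_div (fun k => coinFlips (Avoids F (3 * k))) 3
    _ ≤ 3 * ∑' k, (1 - 8⁻¹ : ℝ≥0∞) ^ k := by gcongr with k; exact coinFlips_avoids_le hp k

lemma visitEquations_expectedVisits (hF : F.Nonempty) :
    VisitEquations F fun b c => (expectedVisits F b c).toReal := by
  intro b c
  dsimp only
  have hfin : ∀ a : Bool, (if (a, b, c) ∈ F then 0 else expectedVisits F a b * 2⁻¹) ≠ ⊤ :=
    fun a => by
      split_ifs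
      · exact ENNReal.zero_ne_top
      · exact ENNReal.mul_ne_top (expectedVisits_ne_top hF a b) (by simp)
  rw [expectedVisits_eq, ENNReal.toReal_add (by simp) (ENNReal.sum_ne_top.2 fun a _ => hfin a),
    ENNReal.toReal_sum fun a _ => hfin a]
  simp [apply_ite ENNReal.toReal]

end KilledChain

def triple (p : Bool × Bool × Bool) : List Bool := [p.1, p.2.1, p.2.2]

lemma exists_eq_triple {A : List Bool} (hA : A.length = 3) : ∃ p, A = triple p := by
  match A, hA with
  | [a, b, c], _ => exact ⟨(a, b, c), rfl⟩

lemma occursAt_triple_iff {p : Bool × Bool × Bool} {x : ℕ → Bool} {n : ℕ} :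
    occursAt (triple p) x n ↔ ∃ j, n = j + 3 ∧ window x j = p := by
  obtain ⟨a, b, c⟩ := p
  constructor
  · rintro ⟨hn, h⟩
    simp only [triple, List.length_cons, List.length_nil] at hn h
    refine ⟨n - 3, by omega, ?_⟩
    simp only [window, Prod.mk.injEq]
    exact ⟨h 0 (by omega), h 1 (by omega), h 2 (by omega)⟩
  · rintro ⟨j, rfl, hj⟩
    simp only [window, Prod.mk.injEq] at hj
    refine ⟨by simp [triple], fun i hi => ?_⟩
    simp only [triple, List.length_cons, List.length_nil] at hi
    interval_cases i <;> simp [triple, hj]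

lemma hitTime_triple_lt_iff {p q : Bool × Bool × Bool} (hpq : p ≠ q) {x : ℕ → Bool} :
    hitTime (triple p) x < hitTime (triple q) x ↔
      ∃ m, x ∈ Avoids {p, q} (m + 2) ∧ window x m = p := by
  simp only [hitTime_lt_iff, occursAt_triple_iff, Avoids, mem_ofPred_eq, Finset.mem_insert,
    Finset.mem_singleton, not_or]
  constructor
  · rintro ⟨_, ⟨⟨m, rfl, hm⟩, hleast⟩, hQ⟩
    refine ⟨m, fun j hj => ⟨fun hjp => ?_, fun hjq => hQ (j + 3) (by omega) ⟨j, rfl, hjq⟩⟩, hm⟩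
    have := hleast ⟨j, rfl, hjp⟩
    omega
  · rintro ⟨m, havoid, hm⟩
    refine ⟨m + 3, ⟨⟨m, rfl, hm⟩, ?_⟩, ?_⟩
    · rintro _ ⟨j, rfl, hj⟩
      by_contra! hlt
      exact (havoid j (by omega)).1 hj
    · rintro _ hle ⟨j, rfl, hj⟩
      rcases Nat.lt_or_ge j m with hjm | hjm
      · exact (havoid j (by omega)).2 hj
      · obtain rfl : j = m := by omega
        exact hpq (hm.symm.trans hj)

lemma setOf_hitTime_lt_eq {p q : Bool × Bool × Bool} (hpq : p ≠ q) :
    {x | hitTime (triple p) x < hitTime (triple q) x} =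
      ⋃ m, Alive {p, q} p.1 p.2.1 m ∩ {x | x (m + 2) = p.2.2} := by
  ext x
  simp only [mem_ofPred_eq, hitTime_triple_lt_iff hpq, mem_iUnion, Alive, mem_inter_iff, window,
    Prod.ext_iff, and_assoc]

lemma measurableSet_hitTime_lt {p q : Bool × Bool × Bool} (hpq : p ≠ q) :
    MeasurableSet {x | hitTime (triple p) x < hitTime (triple q) x} := by
  rw [setOf_hitTime_lt_eq hpq]
  exact MeasurableSet.iUnion fun m => measurableSet_alive_inter_eval _ _ _ m

lemma coinFlips_hitTime_lt {p q : Bool × Bool × Bool} (hpq : p ≠ q) :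
    coinFlips {x | hitTime (triple p) x < hitTime (triple q) x} =
      expectedVisits {p, q} p.1 p.2.1 * 2⁻¹ := by
  rw [setOf_hitTime_lt_eq hpq, measure_iUnion, expectedVisits, ← ENNReal.tsum_mul_right]
  · exact tsum_congr fun m => coinFlips_inter_eval (dependsOn_alive _ _ m) _
  · refine (pairwise_disjoint_on _).2 fun m n hmn => disjoint_left.2 ?_
    rintro x ⟨⟨⟨-, hm0⟩, hm1⟩, hm2⟩ ⟨⟨⟨hn, -⟩, -⟩, -⟩
    exact hn m (by omega) (Finset.mem_insert.2 (Or.inl (Prod.ext hm0 (Prod.ext hm1 hm2))))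
  · exact fun m => measurableSet_alive_inter_eval _ _ _ m

lemma conwayNum_triple (p q : Bool × Bool × Bool) :
    conwayNum (triple p) (triple q) = (if p = q then 4 else 0) +
      (if p.2.1 = q.1 ∧ p.2.2 = q.2.1 then 2 else 0) + (if p.2.2 = q.1 then 1 else 0) := by
  obtain ⟨a0, a1, a2⟩ := p
  obtain ⟨b0, b1, b2⟩ := q
  simp [conwayNum, triple, Finset.sum_Icc_succ_top, Prod.ext_iff, add_assoc]

lemma conway_ratio_of_visitEquations {p q : Bool × Bool × Bool} (hpq : p ≠ q)
    {v : Bool → Bool → ℝ} (hv : VisitEquations {p, q} v) :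
    v p.1 p.2.1 * 2⁻¹ =
      ((conwayNum (triple q) (triple q) : ℝ) - conwayNum (triple q) (triple p)) /
        ((conwayNum (triple p) (triple p) : ℝ) - conwayNum (triple p) (triple q) +
          conwayNum (triple q) (triple q) - conwayNum (triple q) (triple p)) := by
  have htt := hv true true
  have htf := hv true false
  have hft := hv false true
  have hff := hv false false
  simp only [conwayNum_triple]
  obtain ⟨a0, a1, a2⟩ := p
  obtain ⟨b0, b1, b2⟩ := q
  simp only [Fintype.sum_bool, Finset.mem_insert, Finset.mem_singleton] at htt htf hft hff
  cases a0 <;> cases a1 <;> cases a2 <;> cases b0 <;> cases b1 <;> cases b2 <;>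
    simp at hpq htt htf hft hff ⊢ <;> linarith

end Penney

theorem stmt_4_general {Ω : Type*} [MeasurableSpace Ω] (μ : Measure Ω)
    (X : ℕ → Ω → Bool) (hmeas : ∀ n, Measurable (X n))
    (hindep : iIndepFun X μ)
    (hfair : ∀ n, μ.map (X n) = fairCoin)
    (A B : List Bool) (hA : A.length = 3) (hB : B.length = 3) (hAB : A ≠ B) :
    (μ {ω | hitTime A (fun n => X n ω) < hitTime B (fun n => X n ω)}).toReal =
      ((conwayNum B B : ℝ) - conwayNum B A) /
        ((conwayNum A A : ℝ) - conwayNum A B + (conwayNum B B : ℝ) - conwayNum B A) := by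
  obtain ⟨p, rfl⟩ := Penney.exists_eq_triple hA
  obtain ⟨q, rfl⟩ := Penney.exists_eq_triple hB
  have hpq : p ≠ q := fun h => hAB (congrArg _ h)
  rw [Penney.measure_preimage_eq_coinFlips hmeas hindep hfair
      (Penney.measurableSet_hitTime_lt hpq), Penney.coinFlips_hitTime_lt hpq,
    ENNReal.toReal_mul, ENNReal.toReal_inv, ENNReal.toReal_ofNat]
  exact Penney.conway_ratio_of_visitEquations hpq
    (Penney.visitEquations_expectedVisits (Finset.insert_nonempty _ _))

/-- For distinct length-3 fair-coin patterns A, B,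
P(A before B) = (BB - BA) / (AA - AB + BB - BA) with Conway's leading numbers. -/
theorem stmt_4 {Ω : Type*} [MeasurableSpace Ω] (μ : Measure Ω) [IsProbabilityMeasure μ]
    (X : ℕ → Ω → Bool) (hmeas : ∀ n, Measurable (X n))
    (hindep : iIndepFun X μ)
    (hfair : ∀ n, μ.map (X n) = fairCoin)
    (A B : List Bool) (hA : A.length = 3) (hB : B.length = 3) (hAB : A ≠ B) :
    (μ {ω | hitTime A (fun n => X n ω) < hitTime B (fun n => X n ω)}).toReal =
      ((conwayNum B B : ℝ) - conwayNum B A) /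
        ((conwayNum A A : ℝ) - conwayNum A B + (conwayNum B B : ℝ) - conwayNum B A) :=
  stmt_4_general μ X hmeas hindep hfair A B hA hB hAB
end

section
/- In an i.i.d. fair coin sequence, the probability that HHT occurs before HTT is 2/3. -/
open MeasureTheory ProbabilityTheory
open scoped ENNReal

/-! HHT comes before HTT exactly when the flips avoid `HTT` up to their first `HH` and some
tail follows it. Avoiding both `HH` and `HTT` forces the history up to the first `HH` to be
`T^t (HT)^c HH`, so the event is the disjoint union over `(t, c)` of a cylinder of length
`t + 2c + 2` intersected with the conull event that a tail eventually appears. Its probability is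
`∑ 2^-(t+2c+2) = 2 · 4/3 · 1/4 = 2/3`. -/

theorem occursAt_three_iff {α : Type*} (a b c : α) (x : ℕ → α) (n : ℕ) :
    occursAt [a, b, c] x n ↔
      ∃ j, n = j + 3 ∧ x j = a ∧ x (j + 1) = b ∧ x (j + 2) = c := by
  constructor
  · rintro ⟨hn, h⟩
    obtain ⟨j, rfl⟩ : ∃ j, n = j + 3 := ⟨n - 3, by simp at hn; omega⟩
    exact ⟨j, rfl, by simpa using h 0 (by simp), by simpa using h 1 (by simp),
      by simpa using h 2 (by simp)⟩
  · rintro ⟨j, rfl, ha, hb, hc⟩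
    refine ⟨by simp, fun i hi => ?_⟩
    simp only [List.length_cons, List.length_nil] at hi
    interval_cases i <;> simpa

theorem hitTime_lt_hitTime_iff {α : Type*} (P Q : List α) (x : ℕ → α) :
    hitTime P x < hitTime Q x ↔ ∃ n, occursAt P x n ∧ ∀ m, occursAt Q x m → n < m := by
  simp only [hitTime, sInf_image, iInf_lt_iff, Set.mem_ofPred_eq, exists_prop]
  constructor
  · rintro ⟨n, hn, hlt⟩
    exact ⟨n, hn, fun m hm => Nat.cast_lt.mp (hlt.trans_le (biInf_le _ hm))⟩
  · rintro ⟨n, hn, hfirst⟩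
    refine ⟨n, hn, (ENNReal.lt_add_right (by simp) one_ne_zero).trans_le ?_⟩
    exact le_iInf₂ fun m hm => by exact_mod_cast hfirst m hm

theorem hitTime_HHT_lt_HTT_iff (x : ℕ → Bool) :
    hitTime [true, true, false] x < hitTime [true, false, false] x ↔
      ∃ a, x a = true ∧ x (a + 1) = true ∧ x (a + 2) = false ∧
        ∀ j ≤ a, x j = true → x (j + 1) = false → x (j + 2) = true := by
  simp only [hitTime_lt_hitTime_iff, occursAt_three_iff]
  constructor
  · rintro ⟨_, ⟨a, rfl, h0, h1, h2⟩, hfirst⟩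
    refine ⟨a, h0, h1, h2, fun j hj hj0 hj1 => ?_⟩
    by_contra hj2
    have := hfirst (j + 3) ⟨j, rfl, hj0, hj1, by simpa using hj2⟩
    omega
  · rintro ⟨a, h0, h1, h2, hnoHTT⟩
    refine ⟨a + 3, ⟨a, rfl, h0, h1, h2⟩, ?_⟩
    rintro _ ⟨j, rfl, hj0, hj1, hj2⟩
    by_contra hle
    simp_all [hnoHTT j (by omega) hj0 hj1]

/-- `T^t (HT)^c` followed by heads forever. Its first `t + 2c + 2` letters are exactly the
histories that first show `HH` at time `t + 2c` without having shown `HTT`. -/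
def hhWord (t c i : ℕ) : Bool :=
  if i < t then false else if i < t + 2 * c then (i - t) % 2 = 0 else true

theorem hhWord_eq_true_iff {t c i : ℕ} :
    hhWord t c i = true ↔ t ≤ i ∧ (i < t + 2 * c → (i - t) % 2 = 0) := by
  unfold hhWord; split_ifs <;> simp <;> omega

theorem hhWord_of_lt {t c i : ℕ} (h : i < t) : hhWord t c i = false := by
  simp [hhWord, h]

theorem hhWord_of_le {t c i : ℕ} (h : t + 2 * c ≤ i) : hhWord t c i = true := by
  rw [hhWord_eq_true_iff]; omega

theorem hhWord_add_two_eq_true {t c j : ℕ} (h0 : hhWord t c j = true)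
    (h1 : hhWord t c (j + 1) = false) : hhWord t c (j + 2) = true := by
  rw [hhWord_eq_true_iff] at h0 ⊢
  rw [← Bool.not_eq_true, hhWord_eq_true_iff] at h1
  omega

theorem le_of_hhWord_add_one_eq_true {t c j : ℕ} (h0 : hhWord t c j = true)
    (h1 : hhWord t c (j + 1) = true) : t + 2 * c ≤ j := by
  rw [hhWord_eq_true_iff] at h0 h1
  omega

theorem exists_eq_hhWord_of_forall_lt {x : ℕ → Bool} {t k : ℕ} (hlt : ∀ i < t, x i = false)
    (ht : x t = true) (hk : x k = true) (hk1 : x (k + 1) = true) (htk : t ≤ k)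
    (hstep : ∀ j < k, x j = true → x (j + 1) = false ∧ x (j + 2) = true) :
    ∃ c, k = t + 2 * c ∧ ∀ i < k + 2, x i = hhWord t c i := by
  have heven : ∀ d, t + 2 * d ≤ k → x (t + 2 * d) = true := by
    intro d
    induction d with
    | zero => exact fun _ => ht
    | succ d ih => exact fun hd => (hstep _ (by omega) (ih (by omega))).2
  obtain ⟨c, hc⟩ : ∃ c, k = t + 2 * c := by
    obtain ⟨c, hc | hc⟩ := Nat.even_or_odd' (k - t)
    · exact ⟨c, by omega⟩
    · have := (hstep _ (by omega) (heven c (by omega))).1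
      rw [show t + 2 * c + 1 = k by omega, hk] at this
      contradiction
  refine ⟨c, hc, fun i hi => ?_⟩
  rcases lt_or_ge i t with hit | hti
  · rw [hlt i hit, hhWord_of_lt hit]
  rcases lt_or_ge i k with hik | hki
  · obtain ⟨d, hd | hd⟩ := Nat.even_or_odd' (i - t)
    · rw [show i = t + 2 * d by omega, heven d (by omega), eq_comm, hhWord_eq_true_iff]
      omega
    · rw [show i = t + 2 * d + 1 by omega, (hstep _ (by omega) (heven d (by omega))).1,
        eq_comm, ← Bool.not_eq_true, hhWord_eq_true_iff]
      omega
  · rw [hhWord_of_le (by omega)]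
    obtain rfl | rfl : i = k ∨ i = k + 1 := by omega
    exacts [hk, hk1]

theorem exists_hhWord_of_hitTime_lt {x : ℕ → Bool}
    (h : hitTime [true, true, false] x < hitTime [true, false, false] x) :
    ∃ t c, (∀ i < t + 2 * c + 2, x i = hhWord t c i) ∧
      ∃ m ≥ t + 2 * c + 2, x m = false := by
  classical
  obtain ⟨a, h0, h1, h2, hnoHTT⟩ := (hitTime_HHT_lt_HTT_iff x).1 h
  have hHH : ∃ k, x k = true ∧ x (k + 1) = true := ⟨a, h0, h1⟩
  have hka : Nat.find hHH ≤ a := Nat.find_min' hHH ⟨h0, h1⟩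
  have hH : ∃ t, x t = true := ⟨_, (Nat.find_spec hHH).1⟩
  have hstep : ∀ j < Nat.find hHH, x j = true → x (j + 1) = false ∧ x (j + 2) = true := by
    intro j hj hj0
    have hj1 : x (j + 1) = false := by simpa [hj0] using Nat.find_min hHH hj
    exact ⟨hj1, hnoHTT j (by omega) hj0 hj1⟩
  obtain ⟨c, hc, hagree⟩ := exists_eq_hhWord_of_forall_lt
    (fun i hi => by simpa using Nat.find_min hH hi) (Nat.find_spec hH) (Nat.find_spec hHH).1
    (Nat.find_spec hHH).2 (Nat.find_min' hH (Nat.find_spec hHH).1) hstep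
  exact ⟨_, c, hc ▸ hagree, a + 2, by omega, h2⟩

theorem hitTime_lt_of_hhWord {x : ℕ → Bool} {t c : ℕ}
    (hagree : ∀ i < t + 2 * c + 2, x i = hhWord t c i)
    (htail : ∃ m ≥ t + 2 * c + 2, x m = false) :
    hitTime [true, true, false] x < hitTime [true, false, false] x := by
  classical
  set k := t + 2 * c
  set r := Nat.find htail
  obtain ⟨hkr, hr⟩ : r ≥ k + 2 ∧ x r = false := Nat.find_spec htail
  have hrun : ∀ i, k ≤ i → i < r → x i = true := fun i hki hir => by
    rcases lt_or_ge i (k + 2) with hi | hi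
    · rw [hagree i hi, hhWord_of_le hki]
    · simpa [hi] using Nat.find_min htail hir
  refine (hitTime_HHT_lt_HTT_iff x).2 ⟨r - 2, hrun _ (by omega) (by omega),
    hrun _ (by omega) (by omega), by rwa [show r - 2 + 2 = r by omega], fun j hj hj0 hj1 => ?_⟩
  rcases lt_or_ge j k with hjk | hkj
  · rw [hagree j (by omega)] at hj0
    rw [hagree (j + 1) (by omega)] at hj1
    rw [hagree (j + 2) (by omega)]
    exact hhWord_add_two_eq_true hj0 hj1
  · simp [hrun (j + 1) (by omega) (by omega)] at hj1

theorem isLeast_of_hhWord {x : ℕ → Bool} {t c : ℕ}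
    (hagree : ∀ i < t + 2 * c + 2, x i = hhWord t c i) :
    IsLeast {i | x i = true} t ∧ IsLeast {i | x i = true ∧ x (i + 1) = true} (t + 2 * c) := by
  refine ⟨⟨?_, fun i hi => ?_⟩, ⟨?_, fun i ⟨hi0, hi1⟩ => ?_⟩⟩
  · rw [Set.mem_ofPred_eq, hagree t (by omega), hhWord_eq_true_iff]; omega
  · by_contra! hit
    simp [Set.mem_ofPred_eq, hagree i (by omega), hhWord_of_lt hit] at hi
  · rw [Set.mem_ofPred_eq, hagree (t + 2 * c) (by omega), hagree (t + 2 * c + 1) (by omega)]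
    exact ⟨hhWord_of_le le_rfl, hhWord_of_le (by omega)⟩
  · by_contra! hi
    rw [hagree i (by omega)] at hi0
    rw [hagree (i + 1) (by omega)] at hi1
    exact absurd (le_of_hhWord_add_one_eq_true hi0 hi1) (by omega)

theorem eq_of_hhWord_of_hhWord {x : ℕ → Bool} {t c t' c' : ℕ}
    (h : ∀ i < t + 2 * c + 2, x i = hhWord t c i)
    (h' : ∀ i < t' + 2 * c' + 2, x i = hhWord t' c' i) : (t, c) = (t', c') := by
  have ht := (isLeast_of_hhWord h).1.unique (isLeast_of_hhWord h').1
  have hk := (isLeast_of_hhWord h).2.unique (isLeast_of_hhWord h').2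
  ext <;> simp only <;> omega

theorem hitTime_HHT_lt_HTT_iff_exists_hhWord (x : ℕ → Bool) :
    hitTime [true, true, false] x < hitTime [true, false, false] x ↔
      ∃ t c, (∀ i < t + 2 * c + 2, x i = hhWord t c i) ∧
        ∃ m ≥ t + 2 * c + 2, x m = false :=
  ⟨exists_hhWord_of_hitTime_lt, fun ⟨_, _, hagree, htail⟩ =>
    hitTime_lt_of_hhWord hagree htail⟩

set_option linter.deprecated false in
theorem fairCoin_singleton (b : Bool) : fairCoin {b} = 2⁻¹ := by
  rw [fairCoin, PMF.toMeasure_apply_singleton _ _ (measurableSet_singleton b)]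
  cases b <;> simp [PMF.bernoulli_apply]

section FairCoins

variable {Ω : Type*} [MeasurableSpace Ω] {μ : Measure Ω} {X : ℕ → Ω → Bool}

theorem measure_forall_mem_eq (hmeas : ∀ n, Measurable (X n)) (hindep : iIndepFun X μ)
    (hfair : ∀ n, μ.map (X n) = fairCoin) (s : Finset ℕ) (w : ℕ → Bool) :
    μ {ω | ∀ i ∈ s, X i ω = w i} = 2⁻¹ ^ s.card := by
  have hset : {ω | ∀ i ∈ s, X i ω = w i} = ⋂ i ∈ s, X i ⁻¹' {w i} := by ext; simp
  rw [hset, hindep.measure_inter_preimage_eq_mul s (fun i _ => measurableSet_singleton (w i)),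
    Finset.prod_eq_pow_card fun i _ => ?_]
  rw [← Measure.map_apply (hmeas i) (measurableSet_singleton _), hfair, fairCoin_singleton]

theorem measure_forall_ge_eq_true (hmeas : ∀ n, Measurable (X n)) (hindep : iIndepFun X μ)
    (hfair : ∀ n, μ.map (X n) = fairCoin) (N : ℕ) :
    μ {ω | ∀ m ≥ N, X m ω = true} = 0 := by
  refine le_zero_iff.1 (ge_of_tendsto' (ENNReal.tendsto_pow_atTop_nhds_zero_of_lt_one
    (ENNReal.inv_lt_one.2 ENNReal.one_lt_two)) fun j => ?_)
  calc μ {ω | ∀ m ≥ N, X m ω = true}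
      ≤ μ {ω | ∀ m ∈ Finset.Ico N (N + j), X m ω = true} :=
        measure_mono fun ω hω m hm => hω m (Finset.mem_Ico.1 hm).1
    _ = 2⁻¹ ^ j := by
        rw [measure_forall_mem_eq hmeas hindep hfair, Nat.card_Ico, Nat.add_sub_cancel_left]

theorem measure_forall_lt_eq_inter_exists_ge (hmeas : ∀ n, Measurable (X n))
    (hindep : iIndepFun X μ) (hfair : ∀ n, μ.map (X n) = fairCoin) (n : ℕ)
    (w : ℕ → Bool) :
    μ ({ω | ∀ i < n, X i ω = w i} ∩ {ω | ∃ m ≥ n, X m ω = false}) = 2⁻¹ ^ n := by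
  have hcompl : {ω | ∃ m ≥ n, X m ω = false}ᶜ = {ω | ∀ m ≥ n, X m ω = true} := by
    ext; simp
  rw [measure_inter_conull (hcompl ▸ measure_forall_ge_eq_true hmeas hindep hfair n)]
  simpa using measure_forall_mem_eq hmeas hindep hfair (Finset.range n) w

end FairCoins

theorem tsum_inv_two_pow_hhWord_length :
    ∑' p : ℕ × ℕ, (2⁻¹ : ℝ≥0∞) ^ (p.1 + 2 * p.2 + 2) = 2 / 3 := by
  rw [ENNReal.tsum_prod (f := fun t c => (2⁻¹ : ℝ≥0∞) ^ (t + 2 * c + 2))]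
  simp_rw [pow_add, pow_mul, ENNReal.tsum_mul_right, ENNReal.tsum_mul_left,
    ENNReal.tsum_mul_right, ENNReal.tsum_geometric]
  rw [ENNReal.one_sub_inv_two, inv_inv]
  have h4 : (2⁻¹ : ℝ≥0∞) ^ 2 = 4⁻¹ := by rw [← ENNReal.inv_pow]; norm_num
  have h34 : (1 : ℝ≥0∞) - 4⁻¹ = 3 / 4 := by
    refine ENNReal.sub_eq_of_eq_add (by simp) ?_
    rw [← one_div, ENNReal.div_add_div_same, show (3 : ℝ≥0∞) + 1 = 4 by norm_num,
      ENNReal.div_self (by simp) (by simp)]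
  rw [h4, h34, ENNReal.inv_div (by simp) (by simp)]
  calc (2 : ℝ≥0∞) * (4 / 3) * 4⁻¹ = 2 / 3 * (4 * 4⁻¹) := by
        simp only [div_eq_mul_inv]; ring
    _ = 2 / 3 := by rw [ENNReal.mul_inv_cancel (by simp) (by simp), mul_one]

theorem stmt_12_general {Ω : Type*} [MeasurableSpace Ω] (μ : Measure Ω)
    (X : ℕ → Ω → Bool) (hmeas : ∀ n, Measurable (X n))
    (hindep : iIndepFun X μ)
    (hfair : ∀ n, μ.map (X n) = fairCoin) :
    μ {ω | hitTime [true, true, false] (fun n => X n ω)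
         < hitTime [true, false, false] (fun n => X n ω)} = 2/3 := by
  set S : ℕ × ℕ → Set Ω := fun p =>
    {ω | ∀ i < p.1 + 2 * p.2 + 2, X i ω = hhWord p.1 p.2 i} ∩
      {ω | ∃ m ≥ p.1 + 2 * p.2 + 2, X m ω = false}
  have hunion : {ω | hitTime [true, true, false] (fun n => X n ω)
      < hitTime [true, false, false] (fun n => X n ω)} = ⋃ p, S p := by
    ext ω
    simp only [Set.mem_ofPred_eq, hitTime_HHT_lt_HTT_iff_exists_hhWord, Set.mem_iUnion,
      Set.mem_inter_iff, Prod.exists, S]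
  have hdisj : Pairwise (Function.onFun Disjoint S) := fun p q hpq =>
    Set.disjoint_left.2 fun ω hp hq => hpq (eq_of_hhWord_of_hhWord hp.1 hq.1)
  rw [hunion, measure_iUnion hdisj fun p => by measurability]
  simp only [S, measure_forall_lt_eq_inter_exists_ge hmeas hindep hfair]
  exact tsum_inv_two_pow_hhWord_length

/-- In i.i.d. fair coin flips, P(HHT occurs before HTT) = 2/3. -/
theorem stmt_12 {Ω : Type*} [MeasurableSpace Ω] (μ : Measure Ω) [IsProbabilityMeasure μ]
    (X : ℕ → Ω → Bool) (hmeas : ∀ n, Measurable (X n))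
    (hindep : iIndepFun X μ)
    (hfair : ∀ n, μ.map (X n) = fairCoin) :
    μ {ω | hitTime [true, true, false] (fun n => X n ω)
         < hitTime [true, false, false] (fun n => X n ω)} = 2/3 :=
  stmt_12_general μ X hmeas hindep hfair
end
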